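/- arXiv:2202.03280 — 4 statements merged into one kernel-verified Lean document; each statement's English description precedes it below -/
import Mathlib

section
/- Every idempotent transformation e of [1,n] other than the identity is a product of transformations of the form ε_{ij} (i ≠ j), each of which has rank n−1. -/
/-- The rank `n-1` idempotent `ε_{ij}` of `T_n`: it sends `j` to `i` and fixes all other
points. -/
def eps {n : ℕ} (i j : Fin n) : Fin n → Fin n := fun k => if k = j then i else k

/-!
Let `j₁, …, jₘ` be the points moved by the idempotent `e`. Since the moved points lie outside
the image of `e`, the maps `ε_{e(jₜ) jₜ}` do not interfere: composing them sends each `jₜ` to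
`e(jₜ)` and fixes everything else, which is exactly `e`. The list is nonempty as `e ≠ id`.
-/

section

variable {n : ℕ}

@[simp]
lemma eps_apply_self (i j : Fin n) : eps i j j = i := if_pos rfl

@[simp]
lemma eps_apply_of_ne {i j k : Fin n} (hk : k ≠ j) : eps i j k = k := if_neg hk

lemma range_eps {i j : Fin n} (hij : i ≠ j) : Set.range (eps i j) = {j}ᶜ := by
  ext k
  by_cases hkj : k = j
  · subst hkj
    refine iff_of_false ?_ (by simp)
    rintro ⟨x, hx⟩
    unfold eps at hx
    split_ifs at hx with hxk
    exacts [hij hx, hxk hx]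
  · exact iff_of_true ⟨k, eps_apply_of_ne hkj⟩ hkj

lemma ncard_range_eps {i j : Fin n} (hij : i ≠ j) :
    (Set.range (eps i j)).ncard = n - 1 := by
  rw [range_eps hij, Set.ncard_compl, Set.ncard_singleton, Nat.card_eq_fintype_card,
    Fintype.card_fin]

lemma foldr_comp_map_eps_apply (e : Fin n → Fin n) (js : List (Fin n))
    (hjs : ∀ j ∈ js, ∀ k, e k ≠ j) (k : Fin n) :
    (js.map fun j => eps (e j) j).foldr (· ∘ ·) id k = if k ∈ js then e k else k := by
  induction js with
  | nil => simp
  | cons j js ih =>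
    rw [List.map_cons, List.foldr_cons, Function.comp_apply,
      ih fun j' hj' => hjs j' (List.mem_cons_of_mem j hj')]
    by_cases hk : k ∈ js
    · simp [hk, hjs j List.mem_cons_self k]
    · by_cases hkj : k = j
      · subst hkj
        simp [hk]
      · simp [hk, hkj]

end

/-- Every non-identity idempotent transformation of `[1,n]` is a product (composite) of
idempotents of the form `ε_{ij}` with `i ≠ j`, each of which has rank `n-1`. -/
theorem idempotent_is_product_of_eps (n : ℕ) (e : Fin n → Fin n) (he : e ∘ e = e)
    (hid : e ≠ id) :
    ∃ l : List (Fin n → Fin n), l ≠ [] ∧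
      (∀ f ∈ l, ∃ i j : Fin n, i ≠ j ∧ f = eps i j ∧ (Set.range (eps i j)).ncard = n - 1) ∧
      e = l.foldr (· ∘ ·) id := by
  set js := (Finset.univ.filter fun j => e j ≠ j).toList
  have mem_js (j : Fin n) : j ∈ js ↔ e j ≠ j := by simp [js]
  have range_disjoint : ∀ j ∈ js, ∀ k, e k ≠ j := by
    rintro j hj k rfl
    exact (mem_js _).1 hj (congrFun he k)
  refine ⟨js.map fun j => eps (e j) j, ?_, ?_, ?_⟩
  · obtain ⟨k, hk⟩ : ∃ k, e k ≠ k := by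
      by_contra! h
      exact hid (funext h)
    exact List.ne_nil_of_mem (List.mem_map_of_mem ((mem_js k).2 hk))
  · simp only [List.mem_map]
    rintro _ ⟨j, hj, rfl⟩
    exact ⟨e j, j, (mem_js j).1 hj, rfl, ncard_range_eps ((mem_js j).1 hj)⟩
  · funext k
    rw [foldr_comp_map_eps_apply e js range_disjoint]
    by_cases hk : e k = k <;> simp [mem_js, hk]
end

section
/- The idempotent-generated submonoid of T_n (n ≥ 2) equals (T_n \ S_n) ∪ {id}, i.e. a transformation is a product of idempotents if and only if it is the identity or not a permutation. -/
/-!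
An idempotent other than the identity is not injective, and on a finite set a product with a
non-bijective left factor is not bijective, so products of idempotents are the identity or
singular. Conversely, a singular `f` factors as `f = σ ∘ k`, where `σ` is a permutation and the
idempotent `k = invFun f ∘ f` sends each point to a chosen representative of its fibre; `k` is
not surjective. If `g` is a product of idempotents missing a point `z`, then a transposition
agrees off `z` with a product of at most three collapses `i ↦ j`, so `swap x y ∘ g` is again such
a product; by induction on `σ` as a product of transpositions, so is `σ ∘ k = f`.
-/

open Function

namespace Function.End

variable {α : Type*}

def idempotentGenerated (α : Type*) : Submonoid (Function.End α) :=
  Submonoid.closure {e | IsIdempotentElem e}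

def oneOrNotBijective (α : Type*) [Finite α] : Submonoid (Function.End α) where
  carrier := {f | f = 1 ∨ ¬ Bijective f}
  one_mem' := Or.inl rfl
  mul_mem' := by
    rintro a b (rfl | ha) _
    · simpa only [one_mul]
    · refine Or.inr fun hab => ha ?_
      have hsurj : Surjective a := Surjective.of_comp (g := b) hab.surjective
      exact ⟨Finite.injective_iff_surjective.mpr hsurj, hsurj⟩

theorem mul_apply (f g : Function.End α) (t : α) : (f * g) t = f (g t) := rfl

theorem eq_one_of_isIdempotentElem_of_injective {e : Function.End α} (he : IsIdempotentElem e)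
    (hinj : Injective e) : e = 1 :=
  funext fun t => hinj (congrFun he t)

theorem idempotentGenerated_le [Finite α] : idempotentGenerated α ≤ oneOrNotBijective α := by
  refine Submonoid.closure_le.mpr fun e he => ?_
  by_cases hb : Bijective e
  · exact Or.inl (eq_one_of_isIdempotentElem_of_injective he hb.injective)
  · exact Or.inr hb

section collapse

variable [DecidableEq α]

def collapse (i j : α) : Function.End α := update id i j

theorem collapse_apply (i j t : α) : collapse i j t = if t = i then j else t := by
  simp [collapse, update_apply]

theorem collapse_mem_idempotentGenerated (i j : α) : collapse i j ∈ idempotentGenerated α := by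
  refine Submonoid.subset_closure (funext fun t => ?_)
  simp only [mul_apply, collapse_apply]
  split_ifs <;> simp_all

theorem exists_mem_idempotentGenerated_eqOn_swap (x y z : α) :
    ∃ h ∈ idempotentGenerated α, ∀ t ≠ z, h t = Equiv.swap x y t := by
  by_cases hzx : z = x
  · refine ⟨collapse y x, collapse_mem_idempotentGenerated y x, fun t ht => ?_⟩
    simp only [collapse_apply, Equiv.swap_apply_def]
    grind
  by_cases hzy : z = y
  · refine ⟨collapse x y, collapse_mem_idempotentGenerated x y, fun t ht => ?_⟩
    simp only [collapse_apply, Equiv.swap_apply_def]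
    grind
  · refine ⟨collapse z y * (collapse y x * collapse x z),
      mul_mem (collapse_mem_idempotentGenerated z y)
        (mul_mem (collapse_mem_idempotentGenerated y x) (collapse_mem_idempotentGenerated x z)),
      fun t ht => ?_⟩
    simp only [mul_apply, collapse_apply, Equiv.swap_apply_def]
    grind

theorem swap_mul_mem_idempotentGenerated {g : Function.End α} (hg : g ∈ idempotentGenerated α)
    (hs : ¬ Surjective g) (x y : α) :
    MulAction.toEndHom (Equiv.swap x y) * g ∈ idempotentGenerated α := by
  obtain ⟨z, hz⟩ := not_forall.mp hs
  obtain ⟨h, hh, heq⟩ := exists_mem_idempotentGenerated_eqOn_swap x y z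
  have : MulAction.toEndHom (Equiv.swap x y) * g = h * g :=
    funext fun t => (heq (g t) fun ht => hz ⟨t, ht⟩).symm
  exact this ▸ mul_mem hh hg

theorem perm_mul_mem_idempotentGenerated [Finite α] (σ : Equiv.Perm α) {g : Function.End α}
    (hg : g ∈ idempotentGenerated α) (hs : ¬ Surjective g) :
    MulAction.toEndHom σ * g ∈ idempotentGenerated α := by
  induction σ using Equiv.Perm.swap_induction_on with
  | one => exact hg
  | swap_mul π x y _ ih =>
    have hs' : ¬ Surjective (MulAction.toEndHom π * g) := fun hsurj =>
      hs fun b => (hsurj (π b)).imp fun _ ha => π.injective ha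
    rw [map_mul, mul_assoc]
    exact swap_mul_mem_idempotentGenerated ih hs' x y

end collapse

noncomputable def kernelIdempotent [Nonempty α] (f : Function.End α) : Function.End α :=
  invFun f ∘ f

theorem isIdempotentElem_kernelIdempotent [Nonempty α] (f : Function.End α) :
    IsIdempotentElem (kernelIdempotent f) :=
  funext fun t => congrArg (invFun f) (invFun_eq ⟨t, rfl⟩)

theorem exists_perm_mul_kernelIdempotent [Finite α] [Nonempty α] (f : Function.End α) :
    ∃ σ : Equiv.Perm α, MulAction.toEndHom σ * kernelIdempotent f = f := by
  have hinj : Injective fun b : Set.range f => invFun f b := fun b b' hbb' =>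
    Subtype.ext <| (invFun_eq b.2).symm.trans <| (congrArg f hbb').trans (invFun_eq b'.2)
  obtain ⟨σ, hσ⟩ := Equiv.Perm.exists_extending_pair _ _ hinj Subtype.val_injective
  exact ⟨σ, funext fun t => hσ ⟨f t, t, rfl⟩⟩

theorem mem_idempotentGenerated_of_not_bijective [Finite α] {f : Function.End α}
    (hf : ¬ Bijective f) : f ∈ idempotentGenerated α := by
  classical
  have hni : ¬ Injective f := fun hi => hf ⟨hi, Finite.surjective_of_injective hi⟩
  obtain ⟨a, -⟩ := not_forall.mp hni
  have : Nonempty α := ⟨a⟩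
  have hk : ¬ Surjective (kernelIdempotent f) :=
    fun hk => hni (Finite.injective_iff_surjective.mpr hk).of_comp
  obtain ⟨σ, hσ⟩ := exists_perm_mul_kernelIdempotent f
  exact hσ ▸ perm_mul_mem_idempotentGenerated σ
    (Submonoid.subset_closure (isIdempotentElem_kernelIdempotent f)) hk

theorem idempotentGenerated_eq_oneOrNotBijective [Finite α] :
    idempotentGenerated α = oneOrNotBijective α := by
  refine le_antisymm idempotentGenerated_le fun f hf => ?_
  rcases hf with rfl | hf
  · exact one_mem _
  · exact mem_idempotentGenerated_of_not_bijective hf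

end Function.End

theorem idempotent_generated_submonoid_Tn_general (n : ℕ)
    (f : Function.End (Fin n)) :
    f ∈ Submonoid.closure {e : Function.End (Fin n) | e * e = e} ↔
      (f = 1 ∨ ¬ Function.Bijective f) :=
  SetLike.ext_iff.mp Function.End.idempotentGenerated_eq_oneOrNotBijective f

/-- Howie's theorem: for `n ≥ 2`, the idempotent-generated submonoid of the full
transformation monoid `T_n` consists exactly of the identity together with the
non-bijective transformations. -/
theorem idempotent_generated_submonoid_Tn (n : ℕ) (hn : 2 ≤ n)
    (f : Function.End (Fin n)) :
    f ∈ Submonoid.closure {e : Function.End (Fin n) | e * e = e} ↔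
      (f = 1 ∨ ¬ Function.Bijective f) :=
  idempotent_generated_submonoid_Tn_general n f
end

section
/- With A an m-element subset of [1,n] and P a partition of [1,n] into r blocks, let the distinct nonzero sizes of the intersections A ∩ P_j be m_1, …, m_k, let μ_s be the number of blocks P_j with |A ∩ P_j| = m_s, and let ν be the number of blocks disjoint from A. Then the projection of AHom(A,P) to the second coordinate S_r is isomorphic to the direct product S_{μ_1} × … × S_{μ_k} × S_ν. -/
open Equiv

/-- `Perm α ≃* Perm β` from `α ≃ β`. -/
def AHomAux.permCongrMul {α β : Type*} (e : α ≃ β) : Perm α ≃* Perm β :=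
  { Equiv.permCongr e with
    map_mul' := fun p q => by ext b; simp [Equiv.permCongr] }

/-- Pi over `Option` splits as a product, multiplicatively. -/
def AHomAux.piOptionMulEquiv {ι : Type*} (G : Option ι → Type*) [∀ o, Group (G o)] :
    (∀ o, G o) ≃* (∀ s, G (some s)) × G none where
  toFun g := (fun s => g (some s), g none)
  invFun p o := Option.rec p.2 p.1 o
  left_inv g := by funext o; cases o <;> rfl
  right_inv p := rfl
  map_mul' g h := rfl

/-- A subgroup whose membership is “preserves `F` on the domain” is isomorphic to the
mul-opposite of the `DomMulAct` stabilizer of `F`. -/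
def AHomAux.stabEquiv {β ι : Type*} (F : β → ι) (H : Subgroup (Perm β))
    (hmem : ∀ π' : Perm β, π' ∈ H ↔ F ∘ π' = F) :
    H ≃* (MulAction.stabilizer (Perm β)ᵈᵐᵃ F)ᵐᵒᵖ where
  toFun π' := MulOpposite.op ⟨DomMulAct.mk π'.1, by
    rw [DomMulAct.mem_stabilizer_iff]
    simpa using (hmem π'.1).mp π'.2⟩
  invFun g := ⟨DomMulAct.mk.symm g.unop.1, (hmem _).mpr (by
    simpa using DomMulAct.mem_stabilizer_iff.mp g.unop.2)⟩
  left_inv π' := by ext; simp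
  right_inv g := by simp
  map_mul' x y := rfl


/-- Let `A` be an `m`-element subset of `[1,n]` and `P` a partition of `[1,n]` into `r`
blocks; let `m_1, …, m_k` be the distinct nonzero sizes of the intersections `A ∩ P_j`,
`μ_s` the number of blocks with intersection of size `m_s`, and `ν` the number of blocks
disjoint from `A`. Then the projection of `AHom(A,P)` to the second coordinate `S_r` is
isomorphic to `S_{μ_1} × … × S_{μ_k} × S_ν`. -/
theorem ahom_second_projection (n m r k ν : ℕ) (A : Finset (Fin n)) (hA : A.card = m)
    (P : Fin r → Finset (Fin n))
    (hPne : ∀ j, (P j).Nonempty) (hPpart : ∀ x : Fin n, ∃! j, x ∈ P j)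
    (sizes : Fin k → ℕ) (μ : Fin k → ℕ)
    (hinj : Function.Injective sizes) (hpos : ∀ s, 0 < sizes s)
    (hall : ∀ j, (A ∩ P j).Nonempty → ∃ s, (A ∩ P j).card = sizes s)
    (hμ : ∀ s, μ s = (Finset.univ.filter fun j => (A ∩ P j).card = sizes s).card)
    (hν : ν = (Finset.univ.filter fun j => A ∩ P j = ∅).card)
    (H : Subgroup (Equiv.Perm (Fin r)))
    (hH : (H : Set (Equiv.Perm (Fin r))) =
      {π' | ∃ π : Equiv.Perm (Fin m), ∀ (i : Fin m) (j : Fin r),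
        (A.orderIsoOfFin hA i : Fin n) ∈ P j ↔
          (A.orderIsoOfFin hA (π i) : Fin n) ∈ P (π' j)}) :
    Nonempty (H ≃* ((∀ s : Fin k, Equiv.Perm (Fin (μ s))) × Equiv.Perm (Fin ν))) := by
  classical
  -- the block containing the `i`-th element of `A`
  set g : Fin m → Fin r := fun i => (hPpart (A.orderIsoOfFin hA i : Fin n)).choose with hgdef
  have hg : ∀ i, (A.orderIsoOfFin hA i : Fin n) ∈ P (g i) :=
    fun i => (hPpart _).choose_spec.1
  have hg' : ∀ i j, (A.orderIsoOfFin hA i : Fin n) ∈ P j ↔ g i = j := fun i j =>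
    ⟨fun h => ((hPpart _).choose_spec.2 j h).symm, fun h => h ▸ hg i⟩
  set f : Fin r → ℕ := fun j => (A ∩ P j).card with hfdef
  -- fibers of `g` count intersections
  have hcard_fiber : ∀ j, Fintype.card {i // g i = j} = f j := by
    intro j
    rw [show f j = Fintype.card (A ∩ P j : Finset (Fin n)) from (Fintype.card_coe _).symm]
    apply Fintype.card_congr
    refine ((Equiv.subtypeEquivRight fun i => (hg' i j).symm).trans
      ((Equiv.subtypeEquiv (p := fun i => (A.orderIsoOfFin hA i : Fin n) ∈ P j)
        (q := fun x : A => (x : Fin n) ∈ P j)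
        (A.orderIsoOfFin hA).toEquiv fun i => Iff.rfl).trans ?_))
    refine (Equiv.subtypeSubtypeEquivSubtypeInter _ _).trans
      (Equiv.subtypeEquivRight fun x => ?_)
    simp [Finset.mem_inter]
  -- membership in H forces intersection cardinalities to be preserved
  have hH1 : ∀ π' : Perm (Fin r), π' ∈ H → ∀ j, f (π' j) = f j := by
    intro π' hπ' j
    rw [← SetLike.mem_coe, hH] at hπ'
    obtain ⟨π, hπ⟩ := hπ'
    have key : ∀ i j, g i = j ↔ g (π i) = π' j := fun i j => by
      rw [← hg', ← hg']; exact hπ i j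
    rw [← hcard_fiber, ← hcard_fiber]
    refine Fintype.card_congr (Equiv.symm ?_)
    refine ⟨fun x => ⟨π x.1, (key x.1 j).mp x.2⟩, fun y => ⟨π.symm y.1, ?_⟩,
      fun x => Subtype.ext (π.symm_apply_apply x.1),
      fun y => Subtype.ext (π.apply_symm_apply y.1)⟩
    have := key (π.symm y.1) j
    rw [π.apply_symm_apply] at this
    exact this.mpr y.2
  -- conversely, preservation of intersection cardinalities gives membership
  have hH2 : ∀ π' : Perm (Fin r), (∀ j, f (π' j) = f j) → π' ∈ H := by
    intro π' hf
    have τ : ∀ j, {i // g i = j} ≃ {i // g i = π' j} := fun j =>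
      Fintype.equivOfCardEq (by rw [hcard_fiber, hcard_fiber, hf])
    set π : Perm (Fin m) := (Equiv.sigmaFiberEquiv g).symm.trans
      ((Equiv.sigmaCongr π' τ).trans (Equiv.sigmaFiberEquiv g)) with hπdef
    have hπg : ∀ i, g (π i) = π' (g i) := by
      intro i
      show g ((Equiv.sigmaFiberEquiv g) ((Equiv.sigmaCongr π' τ) ⟨g i, ⟨i, rfl⟩⟩)) = _
      exact (τ (g i) ⟨i, rfl⟩).2
    rw [← SetLike.mem_coe, hH]
    refine ⟨π, fun i j => ?_⟩
    rw [hg', hg', hπg i, Equiv.apply_eq_iff_eq]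
  -- the coloring of blocks by intersection type
  set F : Fin r → Option (Fin k) :=
    fun j => if h : (A ∩ P j).Nonempty then some (hall j h).choose else none with hFdef
  have hFsome : ∀ j s, F j = some s ↔ f j = sizes s := by
    intro j s
    by_cases hne : (A ∩ P j).Nonempty
    · have hFj : F j = some (hall j hne).choose := by
        simp only [hFdef]; rw [dif_pos hne]
      have hs := (hall j hne).choose_spec
      rw [hFj]
      simp only [Option.some_inj, hfdef]
      constructor
      · rintro rfl; exact hs
      · intro h; exact hinj (by rw [← hs, ← h])
    · have hFj : F j = none := by
        simp only [hFdef]; rw [dif_neg hne]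
      rw [hFj]
      simp only [reduceCtorEq, false_iff, hfdef]
      intro h
      have h0 : (A ∩ P j).card = 0 := by
        rw [Finset.card_eq_zero]; exact Finset.not_nonempty_iff_eq_empty.mp hne
      have := hpos s; omega
  have hFnone : ∀ j, F j = none ↔ f j = 0 := by
    intro j
    by_cases hne : (A ∩ P j).Nonempty
    · have hFj : F j = some (hall j hne).choose := by
        simp only [hFdef]; rw [dif_pos hne]
      rw [hFj]
      simp only [reduceCtorEq, false_iff, hfdef]
      have := Finset.card_pos.mpr hne
      omega
    · have hFj : F j = none := by
        simp only [hFdef]; rw [dif_neg hne]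
      rw [hFj]
      simp only [true_iff, hfdef, Finset.card_eq_zero]
      exact Finset.not_nonempty_iff_eq_empty.mp hne
  have hFf : ∀ {j j' : Fin r}, f j = f j' → F j = F j' := by
    intro j j' h
    cases hc : F j with
    | none =>
        have h0 := (hFnone j).mp hc
        rw [eq_comm, hFnone]; omega
    | some s =>
        have h0 := (hFsome j s).mp hc
        rw [eq_comm, hFsome]; omega
  have hfF : ∀ {j j' : Fin r}, F j = F j' → f j = f j' := by
    intro j j' h
    cases hc : F j with
    | none =>
        have h1 := (hFnone j).mp hc
        have h2 := (hFnone j').mp (h.symm.trans hc)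
        omega
    | some s =>
        have h1 := (hFsome j s).mp hc
        have h2 := (hFsome j' s).mp (h.symm.trans hc)
        omega
  have hmem : ∀ π' : Perm (Fin r), π' ∈ H ↔ F ∘ π' = F :=
    fun π' => ⟨fun h => funext fun j => hFf (hH1 π' h j),
      fun h => hH2 π' fun j => hfF (congrFun h j)⟩
  have hcs : ∀ s, Fintype.card {j // F j = some s} = μ s := by
    intro s
    rw [Fintype.card_subtype, hμ s]
    congr 1
    ext j
    simp only [Finset.mem_filter, Finset.mem_univ, true_and]
    exact hFsome j s
  have hcn : Fintype.card {j // F j = none} = ν := by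
    rw [Fintype.card_subtype, hν]
    congr 1
    ext j
    simp only [Finset.mem_filter, Finset.mem_univ, true_and]
    rw [hFnone j]
    rw [show f j = (A ∩ P j).card from rfl, Finset.card_eq_zero]
  exact ⟨(AHomAux.stabEquiv F H hmem).trans ((DomMulAct.stabilizerMulEquiv F).trans
    ((AHomAux.piOptionMulEquiv fun o => Perm {j // F j = o}).trans
      (MulEquiv.prodCongr
        (MulEquiv.piCongrRight fun s =>
          AHomAux.permCongrMul (Fintype.equivFinOfCardEq (hcs s)))
        (AHomAux.permCongrMul (Fintype.equivFinOfCardEq hcn)))))⟩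
end

section
/- For every (π, π') ∈ AHom(A,P), the second component decomposes as π' = π̄ ⊕ π'', where π̄ is the permutation of the index set J = {j : A ∩ P_j ≠ ∅} uniquely determined by π via: j π̄ = j' iff a_{iπ} ∈ P_{j'} for some (equivalently, every) i with a_i ∈ P_j; and π'' is an arbitrary permutation of the complementary index set [1,r] \ J. Conversely, every such pair (π, π̄ ⊕ π'') with π in the first projection of AHom(A,P) lies in AHom(A,P). -/
/-- Decomposition of the second component of an element of `AHom(A,P)`. Writing
`A = {a_1 < … < a_m}`, `J = {j : A ∩ P_j ≠ ∅}`, and `C π π'` for the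
auto-homeomorphism condition `a_i ∈ P_j ⟺ a_{iπ} ∈ P_{jπ'}`:
(1) if `(π,π') ∈ AHom(A,P)` then on `J` the permutation `π'` acts as the permutation
`π̄` determined by `π` (`j π̄ = j'` iff `a_{iπ} ∈ P_{j'}` for any `i` with `a_i ∈ P_j`),
and `π'` maps the complement of `J` into itself (acting there as an arbitrary
permutation `π''`);
(2) conversely, for any `π` in the first projection of `AHom(A,P)`, any permutation
`π'` acting as `π̄` on `J` and preserving the complement of `J` yields
`(π,π') ∈ AHom(A,P)`. -/
theorem ahom_second_component_decomposition (n m r : ℕ) (A : Finset (Fin n))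
    (hA : A.card = m) (P : Fin r → Finset (Fin n))
    (hPne : ∀ j, (P j).Nonempty) (hPpart : ∀ x : Fin n, ∃! j, x ∈ P j) :
    (∀ (π : Equiv.Perm (Fin m)) (π' : Equiv.Perm (Fin r)),
      (∀ (i : Fin m) (j : Fin r),
        (A.orderIsoOfFin hA i : Fin n) ∈ P j ↔
          (A.orderIsoOfFin hA (π i) : Fin n) ∈ P (π' j)) →
      ((∀ j : Fin r, (A ∩ P j).Nonempty → ∀ i : Fin m,
          (A.orderIsoOfFin hA i : Fin n) ∈ P j →
            (A.orderIsoOfFin hA (π i) : Fin n) ∈ P (π' j)) ∧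
        (∀ j : Fin r, A ∩ P j = ∅ → A ∩ P (π' j) = ∅))) ∧
    (∀ (π : Equiv.Perm (Fin m)) (π' : Equiv.Perm (Fin r)),
      (∃ π₀ : Equiv.Perm (Fin r), ∀ (i : Fin m) (j : Fin r),
        (A.orderIsoOfFin hA i : Fin n) ∈ P j ↔
          (A.orderIsoOfFin hA (π i) : Fin n) ∈ P (π₀ j)) →
      (∀ j : Fin r, (A ∩ P j).Nonempty → ∀ i : Fin m,
        (A.orderIsoOfFin hA i : Fin n) ∈ P j →
          (A.orderIsoOfFin hA (π i) : Fin n) ∈ P (π' j)) →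
      (∀ j : Fin r, A ∩ P j = ∅ → A ∩ P (π' j) = ∅) →
      (∀ (i : Fin m) (j : Fin r),
        (A.orderIsoOfFin hA i : Fin n) ∈ P j ↔
          (A.orderIsoOfFin hA (π i) : Fin n) ∈ P (π' j))) := by
  constructor
  · intro π π' hC
    refine ⟨fun j _ i hi => (hC i j).mp hi, fun j hj => ?_⟩
    by_contra h
    obtain ⟨a, ha⟩ := Finset.nonempty_iff_ne_empty.mpr h
    simp only [Finset.mem_inter] at ha
    set i₀ : Fin m := (A.orderIsoOfFin hA).symm ⟨a, ha.1⟩ with hi₀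
    have hii : (A.orderIsoOfFin hA i₀ : Fin n) = a := by
      simp [hi₀]
    have := (hC (π.symm i₀) j).mpr (by rw [Equiv.apply_symm_apply, hii]; exact ha.2)
    have hmem : (A.orderIsoOfFin hA (π.symm i₀) : Fin n) ∈ A ∩ P j :=
      Finset.mem_inter.mpr ⟨(A.orderIsoOfFin hA (π.symm i₀)).2, this⟩
    rw [hj] at hmem
    exact absurd hmem (Finset.notMem_empty _)
  · intro π π' _ h1 _ i j
    constructor
    · intro hi
      exact h1 j ⟨_, Finset.mem_inter.mpr ⟨(A.orderIsoOfFin hA i).2, hi⟩⟩ i hi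
    · intro hi
      obtain ⟨j₁, hj₁, huniq⟩ := hPpart (A.orderIsoOfFin hA i : Fin n)
      have h2 : (A.orderIsoOfFin hA (π i) : Fin n) ∈ P (π' j₁) :=
        h1 j₁ ⟨_, Finset.mem_inter.mpr ⟨(A.orderIsoOfFin hA i).2, hj₁⟩⟩ i hj₁
      obtain ⟨j₂, _, huniq2⟩ := hPpart (A.orderIsoOfFin hA (π i) : Fin n)
      have : π' j₁ = π' j := (huniq2 _ h2).trans (huniq2 _ hi).symm
      have : j₁ = j := π'.injective this
      exact this ▸ hj₁
end
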